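/- If ℱ is a doubly stable filter on a quasi-uniform space (X, 𝒰), then its 2-envelope 𝒟_𝒰(ℱ) is also doubly stable. -/

import Mathlib

open Filter Set

variable {X Y : Type*}

/-- Image of a set under a relation: `U(A) = {y : ∃ x ∈ A, (x,y) ∈ U}`. -/
def relImg (U : Set (X × X)) (A : Set X) : Set X := {y | ∃ x ∈ A, (x, y) ∈ U}

/-- Inverse image: `U⁻¹(A) = {y : ∃ x ∈ A, (y,x) ∈ U}`. -/
def relPre (U : Set (X × X)) (A : Set X) : Set X := {y | ∃ x ∈ A, (y, x) ∈ U}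

/-- A quasi-uniformity: a filter of reflexive relations, each containing
a relational square of a member. -/
structure IsQuasiUniformity (𝒰 : Filter (X × X)) : Prop where
  refl : ∀ U ∈ 𝒰, SetRel.id ⊆ U
  comp : ∀ U ∈ 𝒰, ∃ V ∈ 𝒰, SetRel.comp V V ⊆ U

/-- A filter is stable if `⋂_{F ∈ ℱ} U(F) ∈ ℱ` for all `U ∈ 𝒰`. -/
def IsStable (𝒰 : Filter (X × X)) (ℱ : Filter X) : Prop :=
  ∀ U ∈ 𝒰, (⋂ F ∈ ℱ.sets, relImg U F) ∈ ℱ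

/-- `U_ℱ = ⋂_{F ∈ ℱ} (U⁻¹(F) ∩ U(F))`. -/
def bigU (U : Set (X × X)) (ℱ : Filter X) : Set X :=
  ⋂ F ∈ ℱ.sets, (relPre U F ∩ relImg U F)

/-- A filter is doubly stable if `U_ℱ ∈ ℱ` for all `U ∈ 𝒰`. -/
def IsDoublyStable (𝒰 : Filter (X × X)) (ℱ : Filter X) : Prop :=
  ∀ U ∈ 𝒰, bigU U ℱ ∈ ℱ

/-- The 2-envelope of a filter. -/
def envelope (𝒰 : Filter (X × X)) (ℱ : Filter X) : Filter X :=
  Filter.generate {S | ∃ U ∈ 𝒰, ∃ F ∈ ℱ, S = relPre U F ∩ relImg U F}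

/-- The filter `ℱ_𝒰` generated by `{U_ℱ : U ∈ 𝒰}`. -/
def filterU (𝒰 : Filter (X × X)) (ℱ : Filter X) : Filter X :=
  Filter.generate {S | ∃ U ∈ 𝒰, S = bigU U ℱ}

/-- `τ(𝒰)`-cluster points of a filter. -/
def fwdCluster (𝒰 : Filter (X × X)) (ℱ : Filter X) : Set X :=
  {x | ∀ F ∈ ℱ, ∀ U ∈ 𝒰, ∃ y ∈ F, (x, y) ∈ U}

/-- `τ(𝒰⁻¹)`-cluster points of a filter. -/
def bwdCluster (𝒰 : Filter (X × X)) (ℱ : Filter X) : Set X :=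
  {x | ∀ F ∈ ℱ, ∀ U ∈ 𝒰, ∃ y ∈ F, (y, x) ∈ U}

/-- The set of double cluster points of a filter. -/
def doubleCluster (𝒰 : Filter (X × X)) (ℱ : Filter X) : Set X :=
  fwdCluster 𝒰 ℱ ∩ bwdCluster 𝒰 ℱ

/-- The basic entourage `U_D = U_+ ∩ U_-` of the stability quasi-uniformity. -/
def UD (U : Set (X × X)) : Set (Filter X × Filter X) :=
  {p | (⋂ F ∈ p.1.sets, relImg U F) ∈ p.2 ∧ (⋂ G ∈ p.2.sets, relPre U G) ∈ p.1}

/-! If `V ○ V ⊆ U`, the generator `V⁻¹(V_ℱ) ∩ V(V_ℱ)` of `𝒟_𝒰(ℱ)` lies inside `U_ℱ`. Double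
stability of `ℱ` makes every generator of `𝒟_𝒰(ℱ)` a member of `ℱ`, so `ℱ` refines `𝒟_𝒰(ℱ)`,
and `U_ℱ ⊆ U_{𝒟_𝒰(ℱ)}`, the latter being an intersection over fewer sets. -/

section

variable {U U' V W : Set (X × X)} {A A' F : Set X} {ℱ 𝒢 : Filter X}

lemma relPre_mono (hU : U ⊆ U') (hA : A ⊆ A') : relPre U A ⊆ relPre U' A' :=
  fun _ ⟨x, hx, hxy⟩ => ⟨x, hA hx, hU hxy⟩

lemma relImg_mono (hU : U ⊆ U') (hA : A ⊆ A') : relImg U A ⊆ relImg U' A' :=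
  fun _ ⟨x, hx, hxy⟩ => ⟨x, hA hx, hU hxy⟩

lemma relPre_relPre_subset : relPre V (relPre W A) ⊆ relPre (SetRel.comp V W) A :=
  fun _ ⟨_, ⟨z, hz, hyz⟩, hxy⟩ => ⟨z, hz, SetRel.mem_comp.2 ⟨_, hxy, hyz⟩⟩

lemma relImg_relImg_subset : relImg V (relImg W A) ⊆ relImg (SetRel.comp W V) A :=
  fun _ ⟨_, ⟨z, hz, hzy⟩, hyx⟩ => ⟨z, hz, SetRel.mem_comp.2 ⟨_, hzy, hyx⟩⟩

lemma mem_bigU {x : X} : x ∈ bigU U ℱ ↔ ∀ F ∈ ℱ, x ∈ relPre U F ∩ relImg U F := by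
  simp only [bigU, mem_iInter]
  rfl

lemma bigU_subset (hF : F ∈ ℱ) : bigU U ℱ ⊆ relPre U F ∩ relImg U F :=
  fun _ hx => mem_bigU.1 hx F hF

lemma bigU_mono (hU : U ⊆ U') (hℱ : ℱ ≤ 𝒢) : bigU U ℱ ⊆ bigU U' 𝒢 := fun _ hx =>
  mem_bigU.2 fun _ hG =>
    ⟨relPre_mono hU subset_rfl (bigU_subset (hℱ hG) hx).1,
      relImg_mono hU subset_rfl (bigU_subset (hℱ hG) hx).2⟩

lemma relPre_bigU_inter_relImg_bigU_subset :
    relPre V (bigU V ℱ) ∩ relImg V (bigU V ℱ) ⊆ bigU (SetRel.comp V V) ℱ :=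
  fun _ ⟨hpre, himg⟩ => mem_bigU.2 fun _ hF =>
    ⟨relPre_relPre_subset (relPre_mono subset_rfl (fun _ ha => (bigU_subset hF ha).1) hpre),
      relImg_relImg_subset (relImg_mono subset_rfl (fun _ hb => (bigU_subset hF hb).2) himg)⟩

end

section

variable {𝒰 : Filter (X × X)} {ℱ : Filter X}

lemma relPre_inter_relImg_mem_envelope {U : Set (X × X)} {F : Set X} (hU : U ∈ 𝒰) (hF : F ∈ ℱ) :
    relPre U F ∩ relImg U F ∈ envelope 𝒰 ℱ :=
  mem_generate_of_mem ⟨U, hU, F, hF, rfl⟩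

lemma IsDoublyStable.le_envelope (hds : IsDoublyStable 𝒰 ℱ) : ℱ ≤ envelope 𝒰 ℱ :=
  le_generate_iff.2 fun _ ⟨W, hW, _, hF, hS⟩ => hS ▸ mem_of_superset (hds W hW) (bigU_subset hF)

end

theorem stmt8 (𝒰 : Filter (X × X)) (h𝒰 : IsQuasiUniformity 𝒰) (ℱ : Filter X)
    (hds : IsDoublyStable 𝒰 ℱ) : IsDoublyStable 𝒰 (envelope 𝒰 ℱ) := by
  intro U hU
  obtain ⟨V, hV, hVU⟩ := h𝒰.comp U hU
  refine mem_of_superset (relPre_inter_relImg_mem_envelope hV (hds V hV)) ?_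
  exact relPre_bigU_inter_relImg_bigU_subset.trans (bigU_mono hVU hds.le_envelope)
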